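/- Suppose (Q_i)_{i=1}^d is a numéraire-consistent family of probability measures. Then for all i,j, all 0 ≤ r ≤ t ≤ T, and every bounded F(t)-measurable random variable X, the generalized change-of-numéraire formula E^{Q_i}[S_{i,j}(t)·X | F(r)] = S_{i,j}(r)·E^{Q_j}[X·1_{{S_{j,i}(t)>0}} | F(r)] holds Q_i-almost surely. -/

import Mathlib

/-!
Numéraire consistency says that on `F(u)` the measure `S_{ij}(u) • Q_i` equals `S_{ij}(0) • Q_j`
restricted to `{S_{ji}(u) > 0}`. So for `s ∈ F(r)`, the `Q_i`-integral of `S_{ij}(t) X` over `s`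
is `S_{ij}(0)` times the `Q_j`-integral of `X 1_{S_{ji}(t) > 0}` over `s`, while that of
`S_{ij}(r) E^{Q_j}[X 1_{S_{ji}(t) > 0} | F(r)]` is the same integral over `s ∩ {S_{ji}(r) > 0}`.
They agree because under `Q_j` the rate `S_{ji}` cannot leave `0`: on `{S_{ji}(r) = 0}` the rate
`S_{ij}(r)` is infinite, so this set is `Q_i`-null, and consistency at time `t` then makes
`{S_{ji}(r) = 0 < S_{ji}(t)}` a `Q_j`-null set.
-/

open MeasureTheory Filter Set Function
open scoped ENNReal

noncomputable section

/-- The product `x * y` of two elements of `[0,∞]` is defined unless `{x, y} = {0, ∞}`. -/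
def DefinedProd (x y : ℝ≥0∞) : Prop := ¬(x = 0 ∧ y = ∞) ∧ ¬(x = ∞ ∧ y = 0)

/-- An exchange matrix: a `d × d` matrix with entries in `[0,∞]` such that `s i i = 1` and
`s i j * s j k = s i k` whenever the product is defined. -/
structure IsExchangeMatrix {d : ℕ} (s : Fin d → Fin d → ℝ≥0∞) : Prop where
  diag : ∀ i, s i i = 1
  consistent : ∀ i j k, DefinedProd (s i j) (s j k) → s i j * s j k = s i k

/-- A value vector for an exchange matrix `s`: `s i j * v j = v i` whenever defined. -/
def IsValueVector {d : ℕ} (s : Fin d → Fin d → ℝ≥0∞) (v : Fin d → ℝ≥0∞) : Prop :=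
  ∀ i j, DefinedProd (s i j) (v j) → s i j * v j = v i

open Classical in
/-- The set of active indices of an exchange matrix: those whose row sum is finite. -/
def activeFinset {d : ℕ} (s : Fin d → Fin d → ℝ≥0∞) : Finset (Fin d) :=
  Finset.univ.filter fun i => ∑ j, s i j < ∞

/-- The market model of the paper: a right-continuous filtration `F` (with `F 0` trivial) on
`[0,T]`, and a right-continuous adapted process `S` of exchange matrices with deterministic
initial value `S0` all of whose rows are finite (no currency has devalued at time `0`). -/
structure MarketModel (d : ℕ) (Ω : Type*) [mΩ : MeasurableSpace Ω] (T : ℝ) where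
  F : Filtration ℝ mΩ
  S : ℝ → Ω → Fin d → Fin d → ℝ≥0∞
  S0 : Fin d → Fin d → ℝ≥0∞
  T_pos : 0 < T
  rc_F : ∀ t ∈ Set.Ico (0 : ℝ) T, (⨅ u ∈ Set.Ioi t, F u) ≤ F t
  trivial_F0 : ∀ A : Set Ω, MeasurableSet[F 0] A → A = ∅ ∨ A = Set.univ
  adapted_S : ∀ t ∈ Set.Icc (0 : ℝ) T, ∀ i j, Measurable[F t] fun ω => S t ω i j
  rc_S : ∀ ω i j, ∀ t ∈ Set.Ico (0 : ℝ) T,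
    Tendsto (fun u => S u ω i j) (nhdsWithin t (Set.Ioi t)) (nhds (S t ω i j))
  exchange_S : ∀ t ∈ Set.Icc (0 : ℝ) T, ∀ ω, IsExchangeMatrix fun i j => S t ω i j
  init_S : ∀ ω, S 0 ω = S0
  active_S0 : ∀ i, ∑ j, S0 i j < ∞

namespace MarketModel

variable {d : ℕ} {Ω : Type*} [mΩ : MeasurableSpace Ω] {T : ℝ}

/-- Basket-quoted price of the `i`-th currency. -/
def Sbar (M : MarketModel d Ω T) (i : Fin d) (t : ℝ) (ω : Ω) : ℝ≥0∞ :=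
  (∑ j, M.S t ω i j)⁻¹

/-- The (random) set of active currencies at time `t`. -/
def active (M : MarketModel d Ω T) (t : ℝ) (ω : Ω) : Finset (Fin d) :=
  activeFinset fun i j => M.S t ω i j

/-- The payoff of a claim `C` in terms of the basket:
`C̄ = (1/|A(T)|) ∑_{j ∈ A(T)} S̄_j(T) C_j`. -/
def Cbar (M : MarketModel d Ω T) (C : Ω → Fin d → ℝ≥0∞) (ω : Ω) : ℝ≥0∞ :=
  ((M.active T ω).card : ℝ≥0∞)⁻¹ * ∑ j ∈ M.active T ω, M.Sbar j T ω * C ω j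

/-- A contingent claim: an `F(T)`-measurable value vector for `S(T)`. -/
def IsClaim (M : MarketModel d Ω T) (C : Ω → Fin d → ℝ≥0∞) : Prop :=
  (∀ i, Measurable fun ω => C ω i) ∧
  ∀ ω, IsValueVector (fun i j => M.S T ω i j) (C ω)

end MarketModel

/-- A real-valued martingale on the time interval `[0, T]`. -/
def MartingaleOn {Ω : Type*} {mΩ : MeasurableSpace Ω} (F : Filtration ℝ mΩ)
    (Q : Measure Ω) (X : ℝ → Ω → ℝ) (T : ℝ) : Prop :=
  (∀ t ∈ Set.Icc (0 : ℝ) T, StronglyMeasurable[F t] (X t) ∧ Integrable (X t) Q) ∧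
  ∀ r ∈ Set.Icc (0 : ℝ) T, ∀ t ∈ Set.Icc (0 : ℝ) T, r ≤ t → Q[X t|F r] =ᵐ[Q] X r

/-- A real-valued supermartingale on the time interval `[0, T]`. -/
def SupermartingaleOn {Ω : Type*} {mΩ : MeasurableSpace Ω} (F : Filtration ℝ mΩ)
    (Q : Measure Ω) (X : ℝ → Ω → ℝ) (T : ℝ) : Prop :=
  (∀ t ∈ Set.Icc (0 : ℝ) T, StronglyMeasurable[F t] (X t) ∧ Integrable (X t) Q) ∧
  ∀ r ∈ Set.Icc (0 : ℝ) T, ∀ t ∈ Set.Icc (0 : ℝ) T, r ≤ t → Q[X t|F r] ≤ᵐ[Q] X r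

/-- A local martingale on `[0, T]`: there is a nondecreasing sequence of stopping times
with `Q(lim_n τ_n > T) = 1` such that each stopped process is a martingale on `[0, T]`. -/
def LocalMartingaleOn {Ω : Type*} {mΩ : MeasurableSpace Ω} (F : Filtration ℝ mΩ)
    (Q : Measure Ω) (X : ℝ → Ω → ℝ) (T : ℝ) : Prop :=
  ∃ τ : ℕ → Ω → ℝ,
    (∀ n, IsStoppingTime F (fun ω => ((τ n ω : ℝ) : WithTop ℝ))) ∧
    (∀ n ω, τ n ω ≤ τ (n + 1) ω) ∧
    (∀ᵐ ω ∂Q, ∃ n, T < τ n ω) ∧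
    ∀ n, MartingaleOn F Q (fun t ω => X (min t (τ n ω)) ω) T

/-- A numéraire-consistent family of probability measures:
`E^{Q_i}[S_{i,j}(t) 1_A] = S_{i,j}(0) Q_j(A ∩ {S_{j,i}(t) > 0})`. -/
def NumeraireConsistent {d : ℕ} {Ω : Type*} [mΩ : MeasurableSpace Ω] {T : ℝ}
    (M : MarketModel d Ω T) (Q : Fin d → Measure Ω) : Prop :=
  (∀ i, IsProbabilityMeasure (Q i)) ∧
  ∀ i j : Fin d, ∀ t ∈ Set.Icc (0 : ℝ) T, ∀ A : Set Ω, MeasurableSet[M.F t] A →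
    ∫⁻ ω in A, M.S t ω i j ∂(Q i) = M.S0 i j * Q j (A ∩ {ω | 0 < M.S t ω j i})

/-- A valuation measure with respect to the basket: the basket-quoted prices form a
`Q̄`-martingale on `[0, T]`. -/
def IsValuationMeasure {d : ℕ} {Ω : Type*} [mΩ : MeasurableSpace Ω] {T : ℝ}
    (M : MarketModel d Ω T) (Qb : Measure Ω) : Prop :=
  IsProbabilityMeasure Qb ∧
  ∀ i, MartingaleOn M.F Qb (fun t ω => (M.Sbar i t ω).toReal) T

/-- The aggregation valuation formula
`E^{Q̄}[C̄ | F(r)] = ∑_{j ∈ A(r)} S̄_j(r) E^{Q_j}[C_j / |A(T)| | F(r)]`. -/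
def AggregationFormula {d : ℕ} {Ω : Type*} [mΩ : MeasurableSpace Ω] {T : ℝ}
    (M : MarketModel d Ω T) (Qb : Measure Ω) (Q : Fin d → Measure Ω)
    (C : Ω → Fin d → ℝ≥0∞) (r : ℝ) : Prop :=
  Qb[fun ω => (M.Cbar C ω).toReal|M.F r] =ᵐ[Qb] fun ω =>
    ∑ j, Set.indicator {ω' | ∑ k, M.S r ω' j k < ∞}
      (fun ω' => (M.Sbar j r ω').toReal *
        ((Q j)[fun ω'' => (C ω'' j / ((M.active T ω'').card : ℝ≥0∞)).toReal|M.F r]) ω') ω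

/-- An `[0,∞]`-valued process jumps to zero on `[0, T]`: it is zero at some time `t ∈ [0, T]`
while its left limit at `t` is strictly positive. -/
def JumpsToZeroOn (X : ℝ → ℝ≥0∞) (T : ℝ) : Prop :=
  ∃ t ∈ Set.Icc (0 : ℝ) T, X t = 0 ∧ 0 < Function.leftLim X t

/-- A `[0,∞]`-valued stopping time. -/
def IsStoppingTimeE {Ω : Type*} {mΩ : MeasurableSpace Ω} (F : Filtration ℝ mΩ)
    (τ : Ω → ℝ≥0∞) : Prop :=
  ∀ t : ℝ, 0 ≤ t → MeasurableSet[F t] {ω | τ ω ≤ ENNReal.ofReal t}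

/-- Membership in the σ-algebra `F(τ)` for a `[0,∞]`-valued stopping time `τ`. -/
def MeasurableSetAtE {Ω : Type*} {mΩ : MeasurableSpace Ω} (F : Filtration ℝ mΩ)
    (τ : Ω → ℝ≥0∞) (A : Set Ω) : Prop :=
  MeasurableSet A ∧ ∀ t : ℝ, 0 ≤ t → MeasurableSet[F t] (A ∩ {ω | τ ω ≤ ENNReal.ofReal t})

/-- A predictable time: a stopping time announced by a nondecreasing sequence of stopping
times converging to it and strictly smaller than it on its finiteness set. -/
def IsPredictableTimeE {Ω : Type*} {mΩ : MeasurableSpace Ω} (F : Filtration ℝ mΩ)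
    (σ : Ω → ℝ≥0∞) : Prop :=
  IsStoppingTimeE F σ ∧
  ∃ a : ℕ → Ω → ℝ≥0∞,
    (∀ n, IsStoppingTimeE F (a n)) ∧
    (∀ n ω, a n ω ≤ a (n + 1) ω) ∧
    (∀ ω, (⨆ n, a n ω) = σ ω) ∧
    ∀ n ω, 0 < σ ω → σ ω < ∞ → a n ω < σ ω

/-- No Obvious Devaluations: for every currency `i` and stopping time `τ`,
`P(i ∈ A(T) | F(τ)) > 0` almost surely on `{τ < ∞} ∩ {i ∈ A(τ)}`, formulated via
`F(τ)`-measurable subsets of that event. -/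
def NOD {d : ℕ} {Ω : Type*} [mΩ : MeasurableSpace Ω] {T : ℝ}
    (M : MarketModel d Ω T) (P : Measure Ω) : Prop :=
  ∀ i : Fin d, ∀ τ : Ω → ℝ≥0∞, IsStoppingTimeE M.F τ →
    ∀ A : Set Ω, MeasurableSetAtE M.F τ A →
      (∀ ω ∈ A, τ ω < ∞ ∧ ∑ j, M.S (τ ω).toReal ω i j < ∞) →
      0 < P A → 0 < P (A ∩ {ω | ∑ j, M.S T ω i j < ∞})

section TrimWithDensity

variable {Ω : Type*} {m m0 : MeasurableSpace Ω} {hm : m ≤ m0} {μ ν : Measure Ω}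
  {f : Ω → ℝ≥0∞} {c : ℝ≥0∞} {P : Set Ω}

theorem lintegral_mul_eq_of_trim_withDensity_eq (hf : Measurable f)
    (hfν : (μ.withDensity f).trim hm = (c • ν.restrict P).trim hm) {g : Ω → ℝ≥0∞}
    (hg : Measurable[m] g) :
    ∫⁻ ω, f ω * g ω ∂μ = c * ∫⁻ ω in P, g ω ∂ν := by
  calc ∫⁻ ω, f ω * g ω ∂μ = ∫⁻ ω, g ω ∂(μ.withDensity f).trim hm := by
        rw [lintegral_trim hm hg, lintegral_withDensity_eq_lintegral_mul _ hf (hg.mono hm le_rfl)]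
        rfl
    _ = c * ∫⁻ ω in P, g ω ∂ν := by
        rw [hfν, lintegral_trim hm hg, lintegral_smul_measure, smul_eq_mul]

theorem ae_lt_top_of_trim_withDensity_eq [IsFiniteMeasure ν] (hf : Measurable f)
    (hfν : (μ.withDensity f).trim hm = (c • ν.restrict P).trim hm) (hc : c ≠ ∞) :
    ∀ᵐ ω ∂μ, f ω < ∞ := by
  refine ae_lt_top hf ?_
  have h := lintegral_mul_eq_of_trim_withDensity_eq hf hfν (g := 1) measurable_const
  simp only [Pi.one_apply, mul_one, setLIntegral_one] at h
  rw [h]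
  exact ENNReal.mul_ne_top hc (measure_ne_top _ _)

theorem integral_toReal_mul_eq_of_trim_withDensity_eq (hf : Measurable f)
    (hf_top : ∀ᵐ ω ∂μ, f ω < ∞)
    (hfν : (μ.withDensity f).trim hm = (c • ν.restrict P).trim hm) {g : Ω → ℝ}
    (hg : StronglyMeasurable[m] g) :
    ∫ ω, (f ω).toReal * g ω ∂μ = c.toReal * ∫ ω in P, g ω ∂ν := by
  rw [← smul_eq_mul, ← integral_smul_measure, integral_trim hm hg, ← hfν, ← integral_trim hm hg,
    integral_withDensity_eq_integral_toReal_smul hf hf_top]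
  rfl

theorem integrable_toReal_mul_of_trim_withDensity_eq (hf : Measurable f)
    (hf_top : ∀ᵐ ω ∂μ, f ω < ∞)
    (hfν : (μ.withDensity f).trim hm = (c • ν.restrict P).trim hm) (hc : c ≠ ∞) {g : Ω → ℝ}
    (hg : StronglyMeasurable[m] g) (hgi : IntegrableOn g P ν) :
    Integrable (fun ω => (f ω).toReal * g ω) μ := by
  have h : Integrable g ((μ.withDensity f).trim hm) := by
    rw [hfν]
    exact (hgi.smul_measure hc).trim hm hg
  exact (integrable_withDensity_iff_integrable_smul' hf hf_top).mp
    (integrable_of_integrable_trim hm h)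

end TrimWithDensity

theorem IsExchangeMatrix.eq_top_of_symm_eq_zero {d : ℕ} {s : Fin d → Fin d → ℝ≥0∞}
    (hs : IsExchangeMatrix s) {i j : Fin d} (h : s j i = 0) : s i j = ∞ := by
  by_contra h'
  have := hs.consistent i j i ⟨fun hc => by simp [h] at hc, fun hc => h' hc.1⟩
  rw [h, mul_zero, hs.diag] at this
  exact zero_ne_one this

namespace MarketModel

variable {d : ℕ} {Ω : Type*} [MeasurableSpace Ω] {T : ℝ} (M : MarketModel d Ω T)

theorem S0_lt_top (i j : Fin d) : M.S0 i j < ∞ :=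
  (Finset.single_le_sum (f := M.S0 i) (fun _ _ => zero_le) (Finset.mem_univ j)).trans_lt
    (M.active_S0 i)

theorem S0_ne_zero [Nonempty Ω] (i j : Fin d) : M.S0 i j ≠ 0 := fun h => by
  obtain ⟨ω⟩ := ‹Nonempty Ω›
  have hexch := M.exchange_S 0 ⟨le_rfl, M.T_pos.le⟩ ω
  simp only [M.init_S ω] at hexch
  exact (M.S0_lt_top j i).ne (hexch.eq_top_of_symm_eq_zero h)

theorem measurable_S {u : ℝ} (hu : u ∈ Icc 0 T) (i j : Fin d) :
    Measurable fun ω => M.S u ω i j :=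
  (M.adapted_S u hu i j).mono (M.F.le u) le_rfl

theorem measurableSet_S_pos {u : ℝ} (hu : u ∈ Icc 0 T) (i j : Fin d) :
    MeasurableSet[M.F u] {ω | 0 < M.S u ω i j} :=
  measurableSet_lt measurable_const (M.adapted_S u hu i j)

end MarketModel

namespace NumeraireConsistent

variable {d : ℕ} {Ω : Type*} [MeasurableSpace Ω] {T : ℝ} {M : MarketModel d Ω T}
  {Q : Fin d → Measure Ω} {u : ℝ}

theorem trim_withDensity_eq (hQ : NumeraireConsistent M Q) (i j : Fin d)
    (hu : u ∈ Icc 0 T) :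
    ((Q i).withDensity fun ω => M.S u ω i j).trim (M.F.le u) =
      (M.S0 i j • (Q j).restrict {ω | 0 < M.S u ω j i}).trim (M.F.le u) := by
  refine @Measure.ext Ω (M.F u) _ _ fun s hs => ?_
  rw [trim_measurableSet_eq _ hs, trim_measurableSet_eq _ hs, withDensity_apply _ (M.F.le u s hs),
    Measure.smul_apply, smul_eq_mul, Measure.restrict_apply (M.F.le u s hs)]
  exact hQ.2 i j u hu s hs

theorem ae_S_lt_top (hQ : NumeraireConsistent M Q) (i j : Fin d) (hu : u ∈ Icc 0 T) :
    ∀ᵐ ω ∂Q i, M.S u ω i j < ∞ :=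
  have := hQ.1 j
  ae_lt_top_of_trim_withDensity_eq (M.measurable_S hu i j) (hQ.trim_withDensity_eq i j hu)
    (M.S0_lt_top i j).ne

theorem integrable_S_mul (hQ : NumeraireConsistent M Q) (i j : Fin d) (hu : u ∈ Icc 0 T)
    {g : Ω → ℝ} (hg : StronglyMeasurable[M.F u] g)
    (hgi : IntegrableOn g {ω | 0 < M.S u ω j i} (Q j)) :
    Integrable (fun ω => (M.S u ω i j).toReal * g ω) (Q i) :=
  integrable_toReal_mul_of_trim_withDensity_eq (M.measurable_S hu i j) (hQ.ae_S_lt_top i j hu)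
    (hQ.trim_withDensity_eq i j hu) (M.S0_lt_top i j).ne hg hgi

theorem setIntegral_S_mul (hQ : NumeraireConsistent M Q) (i j : Fin d) (hu : u ∈ Icc 0 T)
    {s : Set Ω} (hs : MeasurableSet[M.F u] s) {g : Ω → ℝ} (hg : StronglyMeasurable[M.F u] g) :
    ∫ ω in s, (M.S u ω i j).toReal * g ω ∂Q i =
      (M.S0 i j).toReal * ∫ ω in s ∩ {ω | 0 < M.S u ω j i}, g ω ∂Q j := by
  rw [← integral_indicator (M.F.le u s hs), inter_comm, ← setIntegral_indicator (M.F.le u s hs),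
    ← integral_toReal_mul_eq_of_trim_withDensity_eq (M.measurable_S hu i j)
      (hQ.ae_S_lt_top i j hu) (hQ.trim_withDensity_eq i j hu) (hg.indicator hs)]
  simp only [indicator_mul_right]

theorem measure_S_eq_zero (hQ : NumeraireConsistent M Q) (i j : Fin d) (hu : u ∈ Icc 0 T) :
    Q i {ω | M.S u ω j i = 0} = 0 := by
  set A := {ω | M.S u ω j i = 0}
  have hA : MeasurableSet[M.F u] A := M.adapted_S u hu j i (measurableSet_singleton 0)
  have h := hQ.2 i j u hu A hA
  rw [setLIntegral_congr_fun (M.F.le u A hA)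
      fun ω hω => (M.exchange_S u hu ω).eq_top_of_symm_eq_zero hω,
    show A ∩ {ω | 0 < M.S u ω j i} = ∅ from eq_empty_of_forall_notMem fun ω hω => hω.2.ne' hω.1]
    at h
  simpa using h

theorem ae_S_eq_zero_of_eq_zero (hQ : NumeraireConsistent M Q) (i j : Fin d) {r t : ℝ}
    (hr : r ∈ Icc 0 T) (ht : t ∈ Icc 0 T) (hrt : r ≤ t) :
    ∀ᵐ ω ∂Q j, M.S r ω j i = 0 → M.S t ω j i = 0 := by
  have := hQ.1 i
  have := nonempty_of_isProbabilityMeasure (Q i)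
  have hA : MeasurableSet[M.F r] {ω | M.S r ω j i = 0} :=
    M.adapted_S r hr j i (measurableSet_singleton 0)
  have h := hQ.2 i j t ht _ (M.F.mono hrt _ hA)
  rw [Measure.restrict_eq_zero.mpr (hQ.measure_S_eq_zero i j hr), lintegral_zero_measure,
    eq_comm, mul_eq_zero, or_iff_right (M.S0_ne_zero i j)] at h
  rw [ae_iff]
  refine measure_mono_null (fun ω hω => ?_) h
  obtain ⟨h0, hpos⟩ := Classical.not_imp.mp hω
  exact ⟨h0, pos_iff_ne_zero.mpr hpos⟩

theorem setIntegral_inter_S_pos_indicator (hQ : NumeraireConsistent M Q) (i j : Fin d)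
    {r t : ℝ} (hr : r ∈ Icc 0 T) (ht : t ∈ Icc 0 T) (hrt : r ≤ t) {s : Set Ω}
    (hs : MeasurableSet s) (X : Ω → ℝ) :
    ∫ ω in s ∩ {ω | 0 < M.S r ω j i}, {ω | 0 < M.S t ω j i}.indicator X ω ∂Q j =
      ∫ ω in s, {ω | 0 < M.S t ω j i}.indicator X ω ∂Q j := by
  refine (setIntegral_eq_of_subset_of_ae_sdiff_eq_zero hs.nullMeasurableSet
    inter_subset_left ?_).symm
  filter_upwards [hQ.ae_S_eq_zero_of_eq_zero i j hr ht hrt] with ω hω ⟨hωs, hωP⟩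
  have hω0 : M.S t ω j i = 0 := hω (nonpos_iff_eq_zero.mp (not_lt.mp fun hpos => hωP ⟨hωs, hpos⟩))
  exact indicator_of_notMem (show ω ∉ {ω | 0 < M.S t ω j i} from fun hpos => hpos.ne' hω0) X

end NumeraireConsistent

theorem numeraireConsistent_change_of_numeraire_general {d : ℕ} {Ω : Type*} [MeasurableSpace Ω]
    {T : ℝ} (M : MarketModel d Ω T) (Q : Fin d → Measure Ω)
    (hQ : NumeraireConsistent M Q) :
    ∀ i j : Fin d, ∀ r t : ℝ, 0 ≤ r → r ≤ t → t ≤ T →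
      ∀ X : Ω → ℝ, (∃ b : ℝ, ∀ ω, |X ω| ≤ b) → StronglyMeasurable[M.F t] X →
        (Q i)[fun ω => (M.S t ω i j).toReal * X ω|M.F r] =ᵐ[Q i]
          fun ω => (M.S r ω i j).toReal *
            ((Q j)[fun ω' => X ω' *
              Set.indicator {ω'' | 0 < M.S t ω'' j i} (fun _ => (1 : ℝ)) ω'|M.F r]) ω := by
  intro i j r t hr0 hrt htT X ⟨b, hb⟩ hX
  have hr : r ∈ Icc 0 T := ⟨hr0, hrt.trans htT⟩
  have ht : t ∈ Icc 0 T := ⟨hr0.trans hrt, htT⟩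
  have := hQ.1 i
  have := hQ.1 j
  have hP := M.F.le t _ (M.measurableSet_S_pos ht j i)
  have hXi : Integrable X (Q j) :=
    .of_bound (hX.mono (M.F.le t)).aestronglyMeasurable b (ae_of_all _ hb)
  simp only [← indicator_mul_right, mul_one]
  refine (ae_eq_condExp_of_forall_setIntegral_eq (M.F.le r)
    (hQ.integrable_S_mul i j ht hX hXi.integrableOn)
    (fun s _ _ => (hQ.integrable_S_mul i j hr stronglyMeasurable_condExp
      integrable_condExp.integrableOn).integrableOn) (fun s hs _ => ?_)
    ((M.adapted_S r hr i j).ennreal_toReal.stronglyMeasurable.mul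
      stronglyMeasurable_condExp).aestronglyMeasurable).symm
  rw [hQ.setIntegral_S_mul i j hr hs stronglyMeasurable_condExp,
    hQ.setIntegral_S_mul i j ht (M.F.mono hrt _ hs) hX,
    setIntegral_condExp (M.F.le r) (hXi.indicator hP) (hs.inter (M.measurableSet_S_pos hr j i)),
    ← setIntegral_indicator hP, hQ.setIntegral_inter_S_pos_indicator i j hr ht hrt (M.F.le r _ hs)]

/-- Proposition, part (a), change-of-numéraire formula: for a
numéraire-consistent family `(Q_i)`, all `i, j`, all `0 ≤ r ≤ t ≤ T`, and every bounded
`F(t)`-measurable `X`, one has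
`E^{Q_i}[S_{i,j}(t) X | F(r)] = S_{i,j}(r) E^{Q_j}[X 1_{{S_{j,i}(t) > 0}} | F(r)]`,
`Q_i`-almost surely. -/
theorem numeraireConsistent_change_of_numeraire {d : ℕ} {Ω : Type*} [MeasurableSpace Ω]
    {T : ℝ} (hd : 0 < d) (M : MarketModel d Ω T) (Q : Fin d → Measure Ω)
    (hQ : NumeraireConsistent M Q) :
    ∀ i j : Fin d, ∀ r t : ℝ, 0 ≤ r → r ≤ t → t ≤ T →
      ∀ X : Ω → ℝ, (∃ b : ℝ, ∀ ω, |X ω| ≤ b) → StronglyMeasurable[M.F t] X →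
        (Q i)[fun ω => (M.S t ω i j).toReal * X ω|M.F r] =ᵐ[Q i]
          fun ω => (M.S r ω i j).toReal *
            ((Q j)[fun ω' => X ω' *
              Set.indicator {ω'' | 0 < M.S t ω'' j i} (fun _ => (1 : ℝ)) ω'|M.F r]) ω :=
  numeraireConsistent_change_of_numeraire_general M Q hQ
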